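/- arXiv:2507.12339 — 2 statements merged into one kernel-verified Lean document; each statement's English description precedes it below -/
import Mathlib

section
/- (Corollary 3.3, first item — uniform robustness margin.) Assume ι and the input type Ud are finite and nonempty, each Fbar i u is bounded, and each admissible-margin set S(i,u) is bounded above. Define the uniform margin ε* = min over all (i,u) of η(i,u). Then ε* > 0, and for every constant μ with 0 ≤ μ < ε*, the following holds: for all i, all inputs u, all x ∈ P i, all d ∈ D, and all y ∈ E with ‖y − f x u d‖ ≤ μ, there exists j ∈ Δd(i,u) with y ∈ P j; in particular Q y ∈ Δd(i,u). Hence the relation R = {(x,i) : x ∈ P i} is an alternating simulation relation from the symbolic model to the uniformly μ-perturbed system. -/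
open Metric Set Pointwise

/-- The symbolic successor set `Δd(i,u)`: indices `j` whose cell closure meets the
closure of the over-approximated reachable set. -/
def symbSucc {E ι Ud : Type*} [TopologicalSpace E]
    (P : ι → Set E) (Fbar : ι → Ud → Set E) (i : ι) (u : Ud) : Set ι :=
  {j | (closure (Fbar i u) ∩ closure (P j)).Nonempty}

/-- Concretization `Q⁻¹(A) = ⋃_{j ∈ A} P j`. -/
def conc {E ι : Type*} (P : ι → Set E) (A : Set ι) : Set E :=
  ⋃ j ∈ A, P j

/-- The admissible-margin set `S = {ε : 0 ≤ ε ∧ K + closedBall 0 ε ⊆ interior V}`. -/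
def marginSet {E : Type*} [SeminormedAddCommGroup E] (K V : Set E) : Set ℝ :=
  {ε : ℝ | 0 ≤ ε ∧ K + closedBall (0 : E) ε ⊆ interior V}

/-- The robustness margin `η(i,u) = sSup S(i,u)`. -/
noncomputable def eta {E ι Ud : Type*} [SeminormedAddCommGroup E]
    (P : ι → Set E) (Fbar : ι → Ud → Set E) (i : ι) (u : Ud) : ℝ :=
  sSup (marginSet (closure (Fbar i u)) (conc P (symbSucc P Fbar i u)))

/-- The uniform robustness margin `ε* = min_{(i,u)} η(i,u)`. -/
noncomputable def etaMin {E ι Ud : Type*} [SeminormedAddCommGroup E]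
    [Fintype ι] [Fintype Ud] [Nonempty ι] [Nonempty Ud]
    (P : ι → Set E) (Fbar : ι → Ud → Set E) : ℝ :=
  Finset.univ.inf' Finset.univ_nonempty (fun p : ι × Ud => eta P Fbar p.1 p.2)

/-!
Around the compact set `K = closure (Fbar i u)`, the cells `P j` with `j ∉ Δd(i,u)` have
closures missing `K`, so their finite union is a closed set disjoint from `K`; its complement
is an open neighbourhood of `K` lying inside `Q⁻¹(Δd(i,u))`. Compactness then gives a positive
thickening of `K` inside that neighbourhood, so every `η(i,u)` is positive, and so is their
minimum over the finitely many pairs `(i,u)`. A point within `μ < ε*` of `f x u d ∈ K` lies in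
`K + closedBall 0 ε` for some admissible `ε`, hence in a cell `P j` with `j ∈ Δd(i,u)`, and by
disjointness of the cells that cell is `P (Q y)`.
-/

section MarginSet

variable {E : Type*} [SeminormedAddCommGroup E] {K V : Set E}

theorem exists_pos_mem_marginSet (hK : IsCompact K) (hKV : K ⊆ interior V) :
    ∃ ε > 0, ε ∈ marginSet K V := by
  obtain ⟨ε, hε, hsub⟩ := hK.exists_cthickening_subset_open isOpen_interior hKV
  exact ⟨ε, hε, hε.le, by rwa [hK.add_closedBall_zero hε.le]⟩

theorem sSup_marginSet_pos (hK : IsCompact K) (hKV : K ⊆ interior V)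
    (hbdd : BddAbove (marginSet K V)) : 0 < sSup (marginSet K V) := by
  obtain ⟨ε, hε, hεS⟩ := exists_pos_mem_marginSet hK hKV
  exact hε.trans_le (le_csSup hbdd hεS)

theorem mem_interior_of_norm_sub_le_of_lt_sSup_marginSet {x y : E} {μ : ℝ} (hx : x ∈ K)
    (hne : (marginSet K V).Nonempty) (hxy : ‖y - x‖ ≤ μ) (hμ : μ < sSup (marginSet K V)) :
    y ∈ interior V := by
  obtain ⟨ε, ⟨-, hεV⟩, hμε⟩ := exists_lt_of_lt_csSup hne hμ
  apply hεV
  rw [← add_sub_cancel x y]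
  exact add_mem_add hx (mem_closedBall_zero_iff.2 (hxy.trans hμε.le))

end MarginSet

section Partition

variable {E ι : Type*} {P : ι → Set E}

@[simp]
theorem mem_conc {A : Set ι} {y : E} : y ∈ conc P A ↔ ∃ j ∈ A, y ∈ P j := by
  simp [conc]

theorem apply_mem_of_mem_conc {Q : E → ι} (hdisj : Pairwise (Function.onFun Disjoint P))
    (hQ : ∀ x, x ∈ P (Q x)) {A : Set ι} {y : E} (hy : y ∈ conc P A) : Q y ∈ A := by
  obtain ⟨j, hj, hyj⟩ := mem_conc.1 hy
  obtain rfl : Q y = j := by_contra fun hne => disjoint_left.1 (hdisj hne) (hQ y) hyj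
  exact hj

variable [TopologicalSpace E]

theorem compl_biUnion_closure_subset_interior_conc [Finite ι] (hcover : ⋃ i, P i = univ)
    (A : Set ι) : (⋃ j ∈ Aᶜ, closure (P j))ᶜ ⊆ interior (conc P A) := by
  have hopen : IsOpen (⋃ j ∈ Aᶜ, closure (P j))ᶜ :=
    ((toFinite _).isClosed_biUnion fun j _ => isClosed_closure).isOpen_compl
  refine interior_maximal (fun x hx => ?_) hopen
  obtain ⟨j, hj⟩ := mem_iUnion.1 (hcover ▸ mem_univ x)
  have hjA : j ∈ A := by_contra fun hjA => hx (mem_biUnion hjA (subset_closure hj))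
  exact mem_conc.2 ⟨j, hjA, hj⟩

theorem closure_subset_interior_conc_symbSucc [Finite ι] {Ud : Type*} (hcover : ⋃ i, P i = univ)
    (Fbar : ι → Ud → Set E) (i : ι) (u : Ud) :
    closure (Fbar i u) ⊆ interior (conc P (symbSucc P Fbar i u)) := by
  intro x hx
  apply compl_biUnion_closure_subset_interior_conc hcover
  intro hxW
  obtain ⟨j, hj, hxj⟩ := mem_iUnion₂.1 hxW
  exact hj ⟨x, hx, hxj⟩

end Partition

section Margins

variable {E ι Ud : Type*} [SeminormedAddCommGroup E] [ProperSpace E] [Finite ι]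
  {P : ι → Set E} {Fbar : ι → Ud → Set E}

theorem eta_pos (hcover : ⋃ i, P i = univ) {i : ι} {u : Ud} (hbdd : Bornology.IsBounded (Fbar i u))
    (hSbdd : BddAbove (marginSet (closure (Fbar i u)) (conc P (symbSucc P Fbar i u)))) :
    0 < eta P Fbar i u :=
  sSup_marginSet_pos hbdd.isCompact_closure
    (closure_subset_interior_conc_symbSucc hcover Fbar i u) hSbdd

theorem mem_interior_conc_of_norm_sub_le (hcover : ⋃ i, P i = univ) {i : ι} {u : Ud}
    (hbdd : Bornology.IsBounded (Fbar i u)) {x y : E} {μ : ℝ} (hx : x ∈ Fbar i u)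
    (hxy : ‖y - x‖ ≤ μ) (hμ : μ < eta P Fbar i u) :
    y ∈ interior (conc P (symbSucc P Fbar i u)) := by
  obtain ⟨ε, -, hε⟩ := exists_pos_mem_marginSet hbdd.isCompact_closure
    (closure_subset_interior_conc_symbSucc hcover Fbar i u)
  exact mem_interior_of_norm_sub_le_of_lt_sSup_marginSet (subset_closure hx) ⟨ε, hε⟩ hxy hμ

end Margins

section EtaMin

variable {E ι Ud : Type*} [SeminormedAddCommGroup E] [Fintype ι] [Fintype Ud] [Nonempty ι]
  [Nonempty Ud] {P : ι → Set E} {Fbar : ι → Ud → Set E}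

theorem etaMin_le_eta (i : ι) (u : Ud) : etaMin P Fbar ≤ eta P Fbar i u :=
  Finset.inf'_le _ (Finset.mem_univ (i, u))

theorem etaMin_pos (h : ∀ i u, 0 < eta P Fbar i u) : 0 < etaMin P Fbar :=
  (Finset.lt_inf'_iff _).2 fun p _ => h p.1 p.2

end EtaMin

theorem uniform_margin_pos_and_altSim_general
    {n q : ℕ} {ι Ud : Type*} [Fintype ι] [Nonempty ι] [Fintype Ud] [Nonempty Ud]
    (P : ι → Set (EuclideanSpace ℝ (Fin n)))
    (hdisj : Pairwise (Function.onFun Disjoint P))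
    (Q : EuclideanSpace ℝ (Fin n) → ι) (hQ : ∀ x, x ∈ P (Q x))
    (D : Set (EuclideanSpace ℝ (Fin q)))
    (f : EuclideanSpace ℝ (Fin n) → Ud → EuclideanSpace ℝ (Fin q) → EuclideanSpace ℝ (Fin n))
    (Fbar : ι → Ud → Set (EuclideanSpace ℝ (Fin n)))
    (hFbar : ∀ i u x d, x ∈ P i → d ∈ D → f x u d ∈ Fbar i u)
    (hbdd : ∀ i u, Bornology.IsBounded (Fbar i u))
    (hSbdd : ∀ i u, BddAbove (marginSet (closure (Fbar i u)) (conc P (symbSucc P Fbar i u)))) :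
    0 < etaMin P Fbar ∧
    ∀ μ : ℝ, 0 ≤ μ → μ < etaMin P Fbar →
      ∀ i : ι, ∀ u : Ud, ∀ x ∈ P i, ∀ d ∈ D, ∀ y : EuclideanSpace ℝ (Fin n),
        ‖y - f x u d‖ ≤ μ →
        (∃ j ∈ symbSucc P Fbar i u, y ∈ P j) ∧ Q y ∈ symbSucc P Fbar i u := by
  have hcover : ⋃ i, P i = univ := iUnion_eq_univ_iff.2 fun x => ⟨Q x, hQ x⟩
  refine ⟨etaMin_pos fun i u => eta_pos hcover (hbdd i u) (hSbdd i u), ?_⟩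
  intro μ _ hμ i u x hx d hd y hy
  have hyV : y ∈ conc P (symbSucc P Fbar i u) := interior_subset <|
    mem_interior_conc_of_norm_sub_le hcover (hbdd i u) (hFbar i u x d hx hd) hy
      (hμ.trans_le (etaMin_le_eta i u))
  exact ⟨mem_conc.1 hyV, apply_mem_of_mem_conc hdisj hQ hyV⟩

/-- Corollary 3.3, first item: the uniform margin is positive and for any uniform
perturbation bound below it, the cell relation is an alternating simulation relation
to the uniformly perturbed system. -/
theorem uniform_margin_pos_and_altSim
    {n q : ℕ} {ι Ud : Type*} [Fintype ι] [Nonempty ι] [Fintype Ud] [Nonempty Ud]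
    (P : ι → Set (EuclideanSpace ℝ (Fin n)))
    (hdisj : Pairwise (Function.onFun Disjoint P))
    (hcover : (⋃ i, P i) = Set.univ)
    (Q : EuclideanSpace ℝ (Fin n) → ι) (hQ : ∀ x, x ∈ P (Q x))
    (D : Set (EuclideanSpace ℝ (Fin q)))
    (f : EuclideanSpace ℝ (Fin n) → Ud → EuclideanSpace ℝ (Fin q) → EuclideanSpace ℝ (Fin n))
    (Fbar : ι → Ud → Set (EuclideanSpace ℝ (Fin n)))
    (hFbar : ∀ i u x d, x ∈ P i → d ∈ D → f x u d ∈ Fbar i u)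
    (hbdd : ∀ i u, Bornology.IsBounded (Fbar i u))
    (hSbdd : ∀ i u, BddAbove (marginSet (closure (Fbar i u)) (conc P (symbSucc P Fbar i u)))) :
    0 < etaMin P Fbar ∧
    ∀ μ : ℝ, 0 ≤ μ → μ < etaMin P Fbar →
      ∀ i : ι, ∀ u : Ud, ∀ x ∈ P i, ∀ d ∈ D, ∀ y : EuclideanSpace ℝ (Fin n),
        ‖y - f x u d‖ ≤ μ →
        (∃ j ∈ symbSucc P Fbar i u, y ∈ P j) ∧ Q y ∈ symbSucc P Fbar i u :=
  uniform_margin_pos_and_altSim_general P hdisj Q hQ D f Fbar hFbar hbdd hSbdd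
end

section
/- (Corollary 3.3, second item — tightness of the uniform margin.) Assume ι and the input type Ud are finite and nonempty, every cell P i is nonempty, D is nonempty, every Fbar i u is closed and is a δ-over-approximation of the true reachable set (Fbar i u ⊆ {f x u d : x ∈ P i, d ∈ D} + closedBall 0 δ for a fixed δ ≥ 0), and every admissible-margin set S(i,u) is nonempty and bounded above. Let ε* = min over all (i,u) of η(i,u). Then for every constant c > ε* + δ there exist a cell index i, an input u, a point x ∈ P i, a disturbance d ∈ D, and y ∈ E with ‖y − f x u d‖ ≤ c and y ∉ Q⁻¹(Δd(i,u)); hence the relation R = {(x,i) : x ∈ P i} is not an alternating simulation relation from the symbolic model to the uniformly c-perturbed system. -/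
open Metric Set Pointwise

/-!
Choose `(i, u)` with `η(i,u) + δ < c`. A margin `ε` strictly between `η(i,u)` and `c - δ` is not
admissible, so some point of `closure (Fbar i u) + closedBall 0 ε` lies outside the interior of
`Q⁻¹(Δd(i,u))`, hence arbitrarily close to a point `y` outside `Q⁻¹(Δd(i,u))`. Then `y` is within
`c - δ` of `Fbar i u`, and by δ-over-approximation within `c` of a true successor `f x u d`.
-/

section SeminormedAddCommGroup

variable {E : Type*} [SeminormedAddCommGroup E]

lemma exists_norm_sub_le_of_mem_add_closedBall {A : Set E} {δ : ℝ} {z : E}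
    (hz : z ∈ A + closedBall (0 : E) δ) : ∃ a ∈ A, ‖z - a‖ ≤ δ := by
  obtain ⟨a, ha, e, he, rfl⟩ := hz
  exact ⟨a, ha, by simpa using he⟩

lemma exists_norm_sub_lt_of_not_add_closedBall_subset_interior {K V : Set E} {ε r : ℝ}
    (h : ¬ K + closedBall (0 : E) ε ⊆ interior V) (hεr : ε < r) :
    ∃ z ∈ K, ∃ y ∉ V, ‖y - z‖ < r := by
  obtain ⟨_, ⟨z, hz, b, hb, rfl⟩, hw⟩ := not_subset.mp h
  replace hw : z + b ∈ closure Vᶜ := by rwa [closure_compl]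
  obtain ⟨y, hy, hyw⟩ := Metric.mem_closure_iff.mp hw (r - ε) (by linarith)
  refine ⟨z, hz, y, hy, ?_⟩
  have hbε : ‖z + b - z‖ ≤ ε := by simpa using hb
  calc ‖y - z‖ ≤ ‖y - (z + b)‖ + ‖z + b - z‖ := norm_sub_le_norm_sub_add_norm_sub _ _ _
    _ < (r - ε) + ε := by rw [← dist_eq_norm, dist_comm]; exact add_lt_add_of_lt_of_le hyw hbε
    _ = r := by ring

lemma sSup_marginSet_nonneg (K V : Set E) : 0 ≤ sSup (marginSet K V) :=
  Real.sSup_nonneg fun _ hε => hε.1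

lemma exists_norm_sub_lt_of_sSup_marginSet_lt {K V : Set E} (hbdd : BddAbove (marginSet K V))
    {r : ℝ} (h : sSup (marginSet K V) < r) : ∃ z ∈ K, ∃ y ∉ V, ‖y - z‖ < r := by
  obtain ⟨ε, hηε, hεr⟩ := exists_between h
  have hε : ¬ K + closedBall (0 : E) ε ⊆ interior V := fun hsub =>
    notMem_of_csSup_lt hηε hbdd ⟨(sSup_marginSet_nonneg K V).trans hηε.le, hsub⟩
  exact exists_norm_sub_lt_of_not_add_closedBall_subset_interior hε hεr

end SeminormedAddCommGroup

theorem uniform_margin_tightness_general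
    {n q : ℕ} {ι Ud : Type*} [Fintype ι] [Nonempty ι] [Fintype Ud] [Nonempty Ud]
    (P : ι → Set (EuclideanSpace ℝ (Fin n)))
    (D : Set (EuclideanSpace ℝ (Fin q)))
    (f : EuclideanSpace ℝ (Fin n) → Ud → EuclideanSpace ℝ (Fin q) → EuclideanSpace ℝ (Fin n))
    (Fbar : ι → Ud → Set (EuclideanSpace ℝ (Fin n)))
    (δ : ℝ)
    (hclosed : ∀ i u, IsClosed (Fbar i u))
    (hover : ∀ i u, Fbar i u ⊆
      {y : EuclideanSpace ℝ (Fin n) | ∃ x ∈ P i, ∃ d ∈ D, f x u d = y} +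
        closedBall (0 : EuclideanSpace ℝ (Fin n)) δ)
    (hSbdd : ∀ i u, BddAbove (marginSet (closure (Fbar i u)) (conc P (symbSucc P Fbar i u))))
    (c : ℝ) (hc : etaMin P Fbar + δ < c) :
    ∃ i : ι, ∃ u : Ud, ∃ x ∈ P i, ∃ d ∈ D, ∃ y : EuclideanSpace ℝ (Fin n),
      ‖y - f x u d‖ ≤ c ∧ y ∉ conc P (symbSucc P Fbar i u) := by
  obtain ⟨⟨i, u⟩, -, hiu⟩ := (Finset.inf'_lt_iff _).mp (show etaMin P Fbar < c - δ by linarith)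
  obtain ⟨z, hz, y, hy, hyz⟩ := exists_norm_sub_lt_of_sSup_marginSet_lt (hSbdd i u) hiu
  obtain ⟨_, ⟨x, hx, d, hd, rfl⟩, hzx⟩ :=
    exists_norm_sub_le_of_mem_add_closedBall (hover i u ((hclosed i u).closure_subset hz))
  refine ⟨i, u, x, hx, d, hd, y, ?_, hy⟩
  linarith [norm_sub_le_norm_sub_add_norm_sub y z (f x u d)]

/-- Corollary 3.3, second item: beyond `ε* + δ` the uniformly perturbed system has a
successor lying in no symbolic successor cell, so the cell relation fails to be an
alternating simulation relation. -/
theorem uniform_margin_tightness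
    {n q : ℕ} {ι Ud : Type*} [Fintype ι] [Nonempty ι] [Fintype Ud] [Nonempty Ud]
    (P : ι → Set (EuclideanSpace ℝ (Fin n)))
    (hdisj : Pairwise (Function.onFun Disjoint P))
    (hcover : (⋃ i, P i) = Set.univ)
    (hP : ∀ i, (P i).Nonempty)
    (Q : EuclideanSpace ℝ (Fin n) → ι) (hQ : ∀ x, x ∈ P (Q x))
    (D : Set (EuclideanSpace ℝ (Fin q))) (hD : D.Nonempty)
    (f : EuclideanSpace ℝ (Fin n) → Ud → EuclideanSpace ℝ (Fin q) → EuclideanSpace ℝ (Fin n))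
    (Fbar : ι → Ud → Set (EuclideanSpace ℝ (Fin n)))
    (hFbar : ∀ i u x d, x ∈ P i → d ∈ D → f x u d ∈ Fbar i u)
    (δ : ℝ) (hδ : 0 ≤ δ)
    (hclosed : ∀ i u, IsClosed (Fbar i u))
    (hover : ∀ i u, Fbar i u ⊆
      {y : EuclideanSpace ℝ (Fin n) | ∃ x ∈ P i, ∃ d ∈ D, f x u d = y} +
        closedBall (0 : EuclideanSpace ℝ (Fin n)) δ)
    (hS : ∀ i u, (marginSet (closure (Fbar i u)) (conc P (symbSucc P Fbar i u))).Nonempty)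
    (hSbdd : ∀ i u, BddAbove (marginSet (closure (Fbar i u)) (conc P (symbSucc P Fbar i u))))
    (c : ℝ) (hc : etaMin P Fbar + δ < c) :
    ∃ i : ι, ∃ u : Ud, ∃ x ∈ P i, ∃ d ∈ D, ∃ y : EuclideanSpace ℝ (Fin n),
      ‖y - f x u d‖ ≤ c ∧ y ∉ conc P (symbSucc P Fbar i u) :=
  uniform_margin_tightness_general P D f Fbar δ hclosed hover hSbdd c hc
end
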